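/- Let F be a finite set of function symbols with arities ar, T(F) the ground terms over F, < an irreflexive transitive relation on T(F) containing the subterm relation, and for each f ∈ F a relation <_f on ar(f)-tuples, such that: if f(b) < f(a) then f(b) ≤ a_i for some component a_i of a or b <_f a; and if every component of a tuple a is in the accessible part W(<), then a is in the accessible part W(<_f). Let f_1, …, f_K ∈ F be distinct, with tuples a_i satisfying the hypotheses: f_{i+1}(a_{i+1}) < f_i(a_i) for 1 ≤ i < K; for each i and every tuple b with b <_{f_i} a_i, if f_i(b) < f_{i−1}(a_{i−1}) (no constraint when i = 1) and every component of b is in W(<) then f_i(b) ∈ W(<); and every component of each a_i is in W(<). Then every term s with s < f_K(a_K) lies in W(<). -/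
import Mathlib


/-- Ground terms over a signature `F` with arity function `ar`,
modeled as the W-type of finitely branching trees. -/
def Term (F : Type) (ar : F → ℕ) : Type := WType (fun f : F => Fin (ar f))

theorem fz_aux {F : Type} [Fintype F] {ar : F → ℕ}
    {lt : Term F ar → Term F ar → Prop}
    {ltf : ∀ f : F, (Fin (ar f) → Term F ar) → (Fin (ar f) → Term F ar) → Prop}
    (htrans : ∀ s t u, lt s t → lt t u → lt s u)
    (hsub : ∀ (f : F) (a : Fin (ar f) → Term F ar) (i : Fin (ar f)),
      lt (a i) (WType.mk f a))
    (hdec : ∀ (f : F) (a b : Fin (ar f) → Term F ar),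
      lt (WType.mk f b) (WType.mk f a) →
      (∃ i, WType.mk f b = a i ∨ lt (WType.mk f b) (a i)) ∨ ltf f b a)
    (hacc : ∀ (f : F) (a : Fin (ar f) → Term F ar),
      (∀ i, Acc lt (a i)) → Acc (ltf f) a) :
    ∀ (n : ℕ) (S : Finset F), Fintype.card F - S.card ≤ n →
      ∀ top : Term F ar,
      (∀ (g : F) (c : Fin (ar g) → Term F ar), g ∈ S → (∀ j, Acc lt (c j)) →
        lt (WType.mk g c) top → Acc lt (WType.mk g c)) →
      ∀ s, lt s top → Acc lt s := by
  classical
  intro n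
  induction n using Nat.strong_induction_on with
  | _ n ih =>
  intro S hS top H s
  induction s with
  | mk g b ihb =>
    intro hs
    have hb : ∀ j, Acc lt (b j) := fun j => ihb j (htrans _ _ _ (hsub g b j) hs)
    by_cases hg : g ∈ S
    · exact H g b hg hb hs
    · have key : ∀ b', Acc (ltf g) b' → (∀ j, Acc lt (b' j)) →
          lt (WType.mk g b') top → Acc lt (WType.mk g b') := by
        intro b' hacc'
        induction hacc' with
        | intro b' _ ihQ =>
          intro hb' htop'
          have hcard : (insert g S).card = S.card + 1 := Finset.card_insert_of_notMem hg
          have hle : (insert g S).card ≤ Fintype.card F := Finset.card_le_univ _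
          refine Acc.intro _ (fun t ht => ?_)
          refine ih (Fintype.card F - (insert g S).card) (by omega) (insert g S)
            le_rfl (WType.mk g b') ?_ t ht
          intro h c hh hc hlt
          rcases Finset.mem_insert.1 hh with rfl | hhS
          · rcases hdec h b' c hlt with ⟨j, heq | hlt2⟩ | hltf
            · exact heq ▸ hb' j
            · exact (hb' j).inv hlt2
            · exact ihQ c hltf hc (htrans _ _ _ hlt htop')
          · exact H h c hhS hc (htrans _ _ _ hlt htop')
      exact key b (hacc g b hb) hb hs

theorem ferreira_zantema_below_fK
    {F : Type} [Fintype F] (ar : F → ℕ)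
    (lt : Term F ar → Term F ar → Prop)
    (ltf : ∀ f : F, (Fin (ar f) → Term F ar) → (Fin (ar f) → Term F ar) → Prop)
    (hirr : ∀ t, ¬ lt t t)
    (htrans : ∀ s t u, lt s t → lt t u → lt s u)
    (hsub : ∀ (f : F) (a : Fin (ar f) → Term F ar) (i : Fin (ar f)),
      lt (a i) (WType.mk f a))
    (hdec : ∀ (f : F) (a b : Fin (ar f) → Term F ar),
      lt (WType.mk f b) (WType.mk f a) →
      (∃ i, WType.mk f b = a i ∨ lt (WType.mk f b) (a i)) ∨ ltf f b a)
    (hacc : ∀ (f : F) (a : Fin (ar f) → Term F ar),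
      (∀ i, Acc lt (a i)) → Acc (ltf f) a)
    (K : ℕ) (hK : 0 < K)
    (f : Fin K → F) (hinj : Function.Injective f)
    (a : ∀ i : Fin K, Fin (ar (f i)) → Term F ar)
    -- f_{i+1}(a_{i+1}) < f_i(a_i)
    (h1 : ∀ (i : Fin K) (h : i.val + 1 < K),
      lt (WType.mk (f ⟨i.val + 1, h⟩) (a ⟨i.val + 1, h⟩)) (WType.mk (f i) (a i)))
    -- for every b <_{f_i} a_i : (f_i(b) < f_{i-1}(a_{i-1}) when i ≥ 1,
    -- no constraint when i is the first index) → components of b in W(<) → f_i(b) ∈ W(<)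
    (h2 : ∀ (i : Fin K) (b : Fin (ar (f i)) → Term F ar), ltf (f i) b (a i) →
      (∀ h : 0 < i.val,
         lt (WType.mk (f i) b)
            (WType.mk (f ⟨i.val - 1, by omega⟩) (a ⟨i.val - 1, by omega⟩))) →
      (∀ j, Acc lt (b j)) → Acc lt (WType.mk (f i) b))
    -- every component of each a_i is in W(<)
    (h3 : ∀ (i : Fin K) (j : Fin (ar (f i))), Acc lt (a i j)) :
    ∀ s : Term F ar,
      lt s (WType.mk (f ⟨K - 1, by omega⟩) (a ⟨K - 1, by omega⟩)) → Acc lt s := by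
  classical
  intro s hs
  have chain : ∀ (d : ℕ) (i : Fin K) (h : i.val + d + 1 < K),
      lt (WType.mk (f ⟨i.val + d + 1, h⟩) (a ⟨i.val + d + 1, h⟩))
         (WType.mk (f i) (a i)) := by
    intro d
    induction d with
    | zero => intro i h; exact h1 i h
    | succ d ihd =>
      intro i h
      have h' : i.val + d + 1 < K := by omega
      exact htrans _ _ _ (h1 ⟨i.val + d + 1, h'⟩ h) (ihd i h')
  have chainlt : ∀ (i j : Fin K), i.val < j.val →
      lt (WType.mk (f j) (a j)) (WType.mk (f i) (a i)) := by
    intro i j hij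
    have hj : j = ⟨i.val + (j.val - i.val - 1) + 1, by omega⟩ := Fin.ext (by simp only [Fin.val_mk]; omega)
    rw [hj]
    exact chain (j.val - i.val - 1) i (by omega)
  refine fz_aux htrans hsub hdec hacc (Fintype.card F) (Finset.image f Finset.univ)
    (Nat.sub_le _ _) _ ?_ s hs
  intro g c hg hc hlt
  obtain ⟨i, -, rfl⟩ := Finset.mem_image.1 hg
  have hiK := i.isLt
  have hstep : lt (WType.mk (f i) c) (WType.mk (f i) (a i)) := by
    by_cases hi : i.val = K - 1
    · have hieq : (⟨K - 1, by omega⟩ : Fin K) = i := Fin.ext (by simp only [Fin.val_mk]; omega)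
      rw [hieq] at hlt
      exact hlt
    · exact htrans _ _ _ hlt (chainlt i ⟨K - 1, by omega⟩ (by simp only [Fin.val_mk]; omega))
  rcases hdec (f i) (a i) c hstep with ⟨j, heq | hlt2⟩ | hltf
  · exact heq ▸ h3 i j
  · exact (h3 i j).inv hlt2
  · refine h2 i c hltf ?_ hc
    intro h0
    exact htrans _ _ _ hlt (chainlt ⟨i.val - 1, by omega⟩ ⟨K - 1, by omega⟩ (by simp only [Fin.val_mk]; omega))
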